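/- arXiv:1603.05072 — 4 statements merged into one kernel-verified Lean document; each statement's English description precedes it below -/
import Mathlib

section
/- For every finite MDP D = (S, s_init, A, δ, w) with strictly positive integer weights and every target set T ⊆ S, there exists a pure memoryless strategy σ* that is optimal for the expected truncated sum: for every strategy σ, E^{σ*}(TS^T) ≤ E^{σ}(TS^T) (expectations valued in [0,∞]). -/
open scoped NNReal ENNReal

/-- A finite Markov decision process: finite state space `S`, finite action space `A`,
an initial state, a nonempty set of available actions in each state, and a probabilistic
transition function (a probability distribution over successors for each available action). -/
structure MDP (S A : Type) [Fintype S] [Fintype A] where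
  init : S
  avail : S → Finset A
  avail_nonempty : ∀ s, (avail s).Nonempty
  tr : S → A → S → ℝ≥0
  tr_sum : ∀ s a, a ∈ avail s → ∑ s' : S, tr s a s' = 1

section Core

variable {S A : Type} [Fintype S] [Fintype A]

/-- A history `s₁ a₁ s₂ a₂ … a_{n-1} s_n` (with `s₁ = init`) is encoded as the
list of steps `[(a₁, s₂), …, (a_{n-1}, s_n)]`. -/
def lastState (M : MDP S A) (h : List (A × S)) : S :=
  (h.getLast?).elim M.init Prod.snd

/-- A (randomized, history-dependent) strategy: to every history it assigns a
probability distribution over actions. -/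
abbrev Strat (S A : Type) := List (A × S) → A → ℝ≥0

/-- The distributions prescribed by a strategy are supported on available actions and
sum up to one. -/
def IsStrategy (M : MDP S A) (σ : Strat S A) : Prop :=
  ∀ h : List (A × S),
    (∀ a, a ∉ M.avail (lastState M h) → σ h a = 0) ∧ ∑ a : A, σ h a = 1

/-- A strategy is pure if it always prescribes a Dirac distribution. -/
def IsPure (σ : Strat S A) : Prop := ∀ h, ∃ a, σ h a = 1

/-- A strategy is memoryless if its choice only depends on the last state of the history. -/
def IsMemoryless (M : MDP S A) (σ : Strat S A) : Prop :=
  ∀ h h' : List (A × S), lastState M h = lastState M h' → σ h = σ h'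

/-- Probability of traversing exactly the steps of the second list, after having already
traversed the history `pre`, when playing strategy `σ`:
the product `∏ σ(prefix)(aᵢ) · δ(sᵢ, aᵢ)(sᵢ₊₁)`. -/
def probFrom (M : MDP S A) (σ : Strat S A) : List (A × S) → List (A × S) → ℝ≥0
  | _, [] => 1
  | pre, (a, s') :: rest =>
      σ pre a * M.tr (lastState M pre) a s' * probFrom M σ (pre ++ [(a, s')]) rest

/-- Probability of the cylinder of a history under strategy `σ`. -/
def probHist (M : MDP S A) (σ : Strat S A) (h : List (A × S)) : ℝ≥0 :=
  probFrom M σ [] h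

/-- The sequence of states `s₁ s₂ … s_n` of a history. -/
def stateSeq (M : MDP S A) (h : List (A × S)) : List S :=
  M.init :: h.map Prod.snd

/-- The history visits the target set `T` exactly at its last state (first visit). -/
def Hits (M : MDP S A) (T : Finset S) (h : List (A × S)) : Prop :=
  (stateSeq M h).getLast (by simp [stateSeq]) ∈ T ∧
    ∀ s ∈ (stateSeq M h).dropLast, s ∉ T

/-- Accumulated weight (truncated sum) along a history. -/
def tsHist (w : A → ℕ) (h : List (A × S)) : ℕ := (h.map fun p => w p.1).sum

/-- `P^σ ( TS^T ≤ ℓ )`: since all weights are strictly positive, the event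
`TS^T ≤ ℓ` is the disjoint union of the cylinders of the histories that hit `T`
at their last state with accumulated weight at most `ℓ`. -/
noncomputable def probTSLe (M : MDP S A) (σ : Strat S A) (w : A → ℕ) (T : Finset S)
    (ℓ : ℕ) : ℝ≥0∞ :=
  ∑' h : {h : List (A × S) // Hits M T h ∧ tsHist w h ≤ ℓ}, (probHist M σ h.1 : ℝ≥0∞)

/-- `P^σ ( TS^T = ∞ )`: the probability of never reaching `T`. -/
noncomputable def probNoReach (M : MDP S A) (σ : Strat S A) (T : Finset S) : ℝ≥0∞ :=
  1 - ∑' h : {h : List (A × S) // Hits M T h}, (probHist M σ h.1 : ℝ≥0∞)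

/-- `E^σ ( TS^T )`, valued in `[0, ∞]`: the truncated sum is determined at the first
visit of `T`, and takes value `∞` on the (measurable) set of runs never reaching `T`. -/
noncomputable def expTS (M : MDP S A) (σ : Strat S A) (w : A → ℕ) (T : Finset S) : ℝ≥0∞ :=
  (∑' h : {h : List (A × S) // Hits M T h},
      (probHist M σ h.1 : ℝ≥0∞) * (tsHist w h.1 : ℝ≥0∞))
    + probNoReach M σ T * ⊤

/-- A run is encoded as the infinite sequence of its steps `(aᵢ, sᵢ₊₁)`;
`stateAt M ρ n` is the `(n+1)`-st state `s_{n+1}` of the run (`s₁ = init`). -/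
def stateAt (M : MDP S A) (ρ : ℕ → A × S) : ℕ → S
  | 0 => M.init
  | n + 1 => (ρ n).2

/-- The run is consistent with strategy `σ`: every step uses an available action, chosen
with positive probability by `σ`, and leads to a successor of positive transition
probability. -/
def Consistent (M : MDP S A) (σ : Strat S A) (ρ : ℕ → A × S) : Prop :=
  ∀ n : ℕ, (ρ n).1 ∈ M.avail (stateAt M ρ n) ∧
    0 < σ (List.ofFn fun i : Fin n => ρ i) (ρ n).1 ∧
    0 < M.tr (stateAt M ρ n) (ρ n).1 (ρ n).2

open Classical in
/-- Truncated sum `TS^T` of a run: the accumulated weight up to the first visit of `T`,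
and `∞` if `T` is never visited. -/
noncomputable def tsRun (M : MDP S A) (w : A → ℕ) (T : Finset S)
    (ρ : ℕ → A × S) : ℝ≥0∞ :=
  if h : ∃ n, stateAt M ρ n ∈ T then
    ((∑ i ∈ Finset.range (Nat.find h), w (ρ i).1 : ℕ) : ℝ≥0∞)
  else ⊤

end Core

/-!
The optimal value `V` is the least fixed point of the Bellman operator
`(Φ f)(s) = min_{a ∈ A(s)} (w a + ∑ δ(s,a)(s') f(s'))` (and `0` on `T`). Unfolding the first step
of an arbitrary strategy shows that the pointwise infimum of the expected truncated sums over all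
strategies is a prefixed point of `Φ`, so `V` lies below the expectation of every strategy.
Conversely, let `σ*` be the memoryless strategy playing an action that attains the minimum in
`V = Φ V`. By induction on `n`, the expected cost of the runs of `σ*` that hit `T` within `n`
steps, plus `n` times the probability of not hitting `T` within `n` steps, is at most `V`; the
induction step uses that every weight is at least `1`. Hence, when `V(s)` is finite, `σ*` reaches
`T` almost surely and its expectation is at most `V(s)`.
-/

lemma ENNReal.tsum_iUnion_eq_iSup_of_monotone {α : Type*} (f : α → ℝ≥0∞) {t : ℕ → Set α}
    (ht : Monotone t) : ∑' x : ⋃ n, t n, f x = ⨆ n, ∑' x : t n, f x := by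
  refine le_antisymm ?_ (iSup_le fun n => ENNReal.tsum_mono_subtype f (Set.subset_iUnion t n))
  simp only [tsum_subtype, Set.indicator_iUnion_apply (M := ℝ≥0∞) rfl]
  rw [ENNReal.tsum_eq_iSup_sum]
  refine iSup_le fun F => ?_
  rw [ENNReal.finsetSum_iSup_of_monotone fun x _ _ hmn => Set.indicator_le_indicator_of_subset
    (ht hmn) (fun _ => zero_le) x]
  exact iSup_mono fun n => ENNReal.sum_le_tsum F

lemma ENNReal.one_sub_sum_mul {ι : Type*} (s : Finset ι) {p x : ι → ℝ≥0∞}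
    (hp : ∑ i ∈ s, p i = 1) (hx : ∀ i ∈ s, x i ≤ 1) :
    1 - ∑ i ∈ s, p i * x i = ∑ i ∈ s, p i * (1 - x i) := by
  have hle : ∑ i ∈ s, p i * x i ≤ 1 :=
    hp ▸ Finset.sum_le_sum fun i hi => mul_le_of_le_one_right' (hx i hi)
  refine ENNReal.sub_eq_of_eq_add_rev (ne_top_of_le_ne_top ENNReal.one_ne_top hle) ?_
  conv_lhs => rw [← hp]
  rw [← Finset.sum_add_distrib]
  refine Finset.sum_congr rfl fun i hi => ?_
  rw [← mul_add, add_tsub_cancel_of_le (hx i hi), mul_one]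

lemma ENNReal.mul_add_one_sub_mul_top {a x : ℝ≥0∞} (hx : x ≤ 1) :
    a * x + (1 - x) * ⊤ = a + (1 - x) * ⊤ := by
  rcases hx.eq_or_lt with rfl | hlt
  · simp
  · rw [ENNReal.mul_top (tsub_pos_of_lt hlt).ne', add_top, add_top]

lemma ENNReal.eq_zero_of_forall_natCast_mul_le {x c : ℝ≥0∞} (hc : c ≠ ⊤)
    (h : ∀ n : ℕ, n * x ≤ c) : x = 0 := by
  by_contra hx
  obtain ⟨n, hn⟩ := ENNReal.exists_nat_mul_gt hx hc
  exact (h n).not_gt hn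

lemma Finset.inf'_le_sum_mul {ι : Type*} [Fintype ι] {s : Finset ι} (hs : s.Nonempty)
    (F : ι → ℝ≥0∞) {μ : ι → ℝ≥0∞} (hμ : ∑ i, μ i = 1) (hsupp : ∀ i ∉ s, μ i = 0) :
    s.inf' hs F ≤ ∑ i, μ i * F i :=
  calc s.inf' hs F = ∑ i, μ i * s.inf' hs F := by rw [← Finset.sum_mul, hμ, one_mul]
    _ ≤ ∑ i, μ i * F i := Finset.sum_le_sum fun i _ => by
      by_cases hi : i ∈ s
      · exact mul_le_mul_right (Finset.inf'_le F hi) _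
      · simp [hsupp i hi]

lemma ENNReal.mul_add_one_sub_le {w x : ℝ≥0∞} (hw : 1 ≤ w) (hx : x ≤ 1) :
    w * x + (1 - x) ≤ w :=
  calc w * x + (1 - x) ≤ w * x + w * (1 - x) := by gcongr; exact le_mul_of_one_le_left' hw
    _ = w := by rw [← mul_add, add_tsub_cancel_of_le hx, mul_one]

namespace MDP

variable {S A : Type} [Fintype S] [Fintype A]

def withInit (M : MDP S A) (s : S) : MDP S A := { M with init := s }

def shift (σ : Strat S A) (p : A × S) : Strat S A := fun h => σ (p :: h)

lemma lastState_withInit_cons (M : MDP S A) (s : S) (p : A × S) (h : List (A × S)) :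
    lastState (M.withInit s) (p :: h) = lastState (M.withInit p.2) h := by
  cases h with
  | nil => rfl
  | cons q t => simp [lastState, List.getLast?_eq_some_getLast (List.cons_ne_nil q t)]

lemma _root_.IsStrategy.shift {M : MDP S A} {s : S} {σ : Strat S A}
    (hσ : IsStrategy (M.withInit s) σ) (p : A × S) :
    IsStrategy (M.withInit p.2) (shift σ p) := fun h => by
  have := hσ (p :: h)
  rwa [lastState_withInit_cons] at this

lemma _root_.IsStrategy.sum_nil_eq_one {M : MDP S A} {σ : Strat S A} (hσ : IsStrategy M σ) :
    ∑ a, (σ [] a : ℝ≥0∞) = 1 := by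
  rw [← ENNReal.ofNNReal_finsetSum, (hσ []).2, ENNReal.coe_one]

lemma probFrom_eq_probHist (M : MDP S A) (σ : Strat S A) (pre h : List (A × S)) :
    probFrom M σ pre h = probHist (M.withInit (lastState M pre)) (fun h' => σ (pre ++ h')) h := by
  induction h generalizing M σ pre with
  | nil => rfl
  | cons p rest ih =>
    have hlast : lastState M (pre ++ [p]) = p.2 := by simp [lastState]
    rw [probFrom, probHist, probFrom, ih, ih, hlast]
    simp only [List.nil_append, List.append_nil, List.append_assoc]
    rfl

lemma probHist_withInit_cons (M : MDP S A) (s : S) (σ : Strat S A) (p : A × S)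
    (h : List (A × S)) :
    probHist (M.withInit s) σ (p :: h)
      = σ [] p.1 * M.tr s p.1 p.2 * probHist (M.withInit p.2) (shift σ p) h := by
  rw [probHist, probFrom, probFrom_eq_probHist]
  rfl

lemma hits_withInit_nil_iff (M : MDP S A) (T : Finset S) (s : S) :
    Hits (M.withInit s) T [] ↔ s ∈ T := by
  simp [Hits, stateSeq, withInit]

lemma hits_withInit_cons_iff (M : MDP S A) (T : Finset S) {s : S} (hs : s ∉ T)
    (p : A × S) (h : List (A × S)) :
    Hits (M.withInit s) T (p :: h) ↔ Hits (M.withInit p.2) T h := by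
  have hne : stateSeq (M.withInit p.2) h ≠ [] := List.cons_ne_nil _ _
  change (s :: stateSeq (M.withInit p.2) h).getLast (List.cons_ne_nil _ _) ∈ T ∧
      (∀ x ∈ (s :: stateSeq (M.withInit p.2) h).dropLast, x ∉ T) ↔ _
  rw [List.getLast_cons hne, List.dropLast_cons_of_ne_nil hne]
  simp [Hits, hs]

lemma eq_nil_of_hits_withInit (M : MDP S A) (T : Finset S) {s : S} (hs : s ∈ T)
    {h : List (A × S)} (hh : Hits (M.withInit s) T h) : h = [] := by
  cases h with
  | nil => rfl
  | cons p t =>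
    have hne : stateSeq (M.withInit p.2) t ≠ [] := List.cons_ne_nil _ _
    have hout : ∀ x ∈ (s :: stateSeq (M.withInit p.2) t).dropLast, x ∉ T := hh.2
    rw [List.dropLast_cons_of_ne_nil hne] at hout
    exact absurd hs (hout s List.mem_cons_self)

section Hitting

variable (M : MDP S A) (T : Finset S)

-- `N = ⊤` imposes no bound; since `⊤ + 1 = ⊤`, the one-step recursions below also cover it.
def hitsWithin (s : S) (N : ℕ∞) : Set (List (A × S)) :=
  {h | Hits (M.withInit s) T h ∧ (h.length : ℕ∞) ≤ N}

variable {M T}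

lemma hitsWithin_of_mem {s : S} (hs : s ∈ T) (N : ℕ∞) : M.hitsWithin T s N = {[]} := by
  ext h
  constructor
  · exact fun hh => eq_nil_of_hits_withInit M T hs hh.1
  · rintro rfl
    exact ⟨(hits_withInit_nil_iff M T s).2 hs, by simp⟩

lemma nil_notMem_hitsWithin {s : S} (hs : s ∉ T) (N : ℕ∞) : [] ∉ M.hitsWithin T s N :=
  fun hh => hs ((hits_withInit_nil_iff M T s).1 hh.1)

lemma cons_mem_hitsWithin_add_one_iff {s : S} (hs : s ∉ T) (N : ℕ∞) (p : A × S)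
    (h : List (A × S)) : p :: h ∈ M.hitsWithin T s (N + 1) ↔ h ∈ M.hitsWithin T p.2 N := by
  simp only [hitsWithin, Set.mem_ofPred_eq, hits_withInit_cons_iff M T hs, List.length_cons,
    Nat.cast_add, Nat.cast_one, ENat.add_le_add_iff_right ENat.one_ne_top]

lemma hitsWithin_zero {s : S} (hs : s ∉ T) : M.hitsWithin T s 0 = ∅ := by
  refine Set.eq_empty_of_forall_notMem fun h hh => nil_notMem_hitsWithin (M := M) hs 0 ?_
  have hlen : h.length = 0 := by exact_mod_cast nonpos_iff_eq_zero.1 hh.2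
  rwa [List.length_eq_zero_iff.1 hlen] at hh

lemma monotone_hitsWithin (s : S) : Monotone fun n : ℕ => M.hitsWithin T s n :=
  fun _ _ hmn _ hh => ⟨hh.1, hh.2.trans (by exact_mod_cast hmn)⟩

lemma iUnion_hitsWithin (s : S) : ⋃ n : ℕ, M.hitsWithin T s n = M.hitsWithin T s ⊤ := by
  ext h
  simpa [hitsWithin] using fun _ => ⟨h.length, le_rfl⟩

def hitsWithinAddOneEquiv {s : S} (hs : s ∉ T) (N : ℕ∞) :
    M.hitsWithin T s (N + 1) ≃ Σ p : A × S, M.hitsWithin T p.2 N where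
  toFun
    | ⟨[], hh⟩ => absurd hh (nil_notMem_hitsWithin hs _)
    | ⟨p :: h, hh⟩ => ⟨p, h, (cons_mem_hitsWithin_add_one_iff hs N p h).1 hh⟩
  invFun x := ⟨x.1 :: x.2.1, (cons_mem_hitsWithin_add_one_iff hs N _ _).2 x.2.2⟩
  left_inv
    | ⟨[], hh⟩ => absurd hh (nil_notMem_hitsWithin hs _)
    | ⟨_ :: _, _⟩ => rfl
  right_inv _ := rfl

lemma tsum_hitsWithin_add_one {s : S} (hs : s ∉ T) (N : ℕ∞) (f : List (A × S) → ℝ≥0∞) :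
    ∑' h : M.hitsWithin T s (N + 1), f h
      = ∑ p : A × S, ∑' h : M.hitsWithin T p.2 N, f (p :: h) := by
  rw [← (hitsWithinAddOneEquiv hs N).symm.tsum_eq, ENNReal.tsum_sigma', tsum_fintype]
  rfl

end Hitting

section Values

variable (M : MDP S A) (w : A → ℕ) (T : Finset S)

noncomputable def stepProb (σ : Strat S A) (s : S) (p : A × S) : ℝ≥0∞ := σ [] p.1 * M.tr s p.1 p.2

noncomputable def hitProb (σ : Strat S A) (s : S) (N : ℕ∞) : ℝ≥0∞ :=
  ∑' h : M.hitsWithin T s N, (probHist (M.withInit s) σ h : ℝ≥0∞)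

noncomputable def hitCost (σ : Strat S A) (s : S) (N : ℕ∞) : ℝ≥0∞ :=
  ∑' h : M.hitsWithin T s N, (probHist (M.withInit s) σ h : ℝ≥0∞) * tsHist w h.1

noncomputable def expCost (σ : Strat S A) (s : S) : ℝ≥0∞ :=
  M.hitCost w T σ s ⊤ + (1 - M.hitProb T σ s ⊤) * ⊤

variable {M w T}

lemma sum_stepProb {σ : Strat S A} {s : S} (hσ : IsStrategy (M.withInit s) σ) :
    ∑ p, M.stepProb σ s p = 1 := by
  rw [Fintype.sum_prod_type, ← hσ.sum_nil_eq_one]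
  refine Finset.sum_congr rfl fun a _ => ?_
  by_cases ha : a ∈ M.avail s
  · simp_rw [stepProb, ← Finset.mul_sum, ← ENNReal.ofNNReal_finsetSum, M.tr_sum s a ha,
      ENNReal.coe_one, mul_one]
  · simp [stepProb, (hσ []).1 a ha]

lemma expTS_withInit (σ : Strat S A) (s : S) : expTS (M.withInit s) σ w T = M.expCost w T σ s := by
  have hits_iff : ∀ h, Hits (M.withInit s) T h ↔ h ∈ M.hitsWithin T s ⊤ :=
    fun h => (and_iff_left le_top).symm
  have tsum_hits (f : List (A × S) → ℝ≥0∞) :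
      ∑' h : {h // Hits (M.withInit s) T h}, f h = ∑' h : M.hitsWithin T s ⊤, f h :=
    (Equiv.subtypeEquivRight hits_iff).tsum_eq fun h => f h.1
  rw [expTS, probNoReach, tsum_hits fun h => (probHist (M.withInit s) σ h : ℝ≥0∞),
    tsum_hits fun h => (probHist (M.withInit s) σ h : ℝ≥0∞) * tsHist w h]
  rfl

lemma hitProb_of_mem {s : S} (hs : s ∈ T) (σ : Strat S A) (N : ℕ∞) :
    M.hitProb T σ s N = 1 := by
  rw [hitProb, hitsWithin_of_mem hs,
    tsum_singleton [] fun h => (probHist (M.withInit s) σ h : ℝ≥0∞)]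
  rfl

lemma hitCost_of_mem {s : S} (hs : s ∈ T) (σ : Strat S A) (N : ℕ∞) :
    M.hitCost w T σ s N = 0 := by
  rw [hitCost, hitsWithin_of_mem hs,
    tsum_singleton [] fun h => (probHist (M.withInit s) σ h : ℝ≥0∞) * tsHist w h]
  simp [tsHist]

lemma hitProb_zero {s : S} (hs : s ∉ T) (σ : Strat S A) : M.hitProb T σ s 0 = 0 := by
  rw [hitProb, hitsWithin_zero hs, tsum_empty]

lemma hitCost_zero {s : S} (hs : s ∉ T) (σ : Strat S A) : M.hitCost w T σ s 0 = 0 := by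
  rw [hitCost, hitsWithin_zero hs, tsum_empty]

lemma hitProb_add_one {s : S} (hs : s ∉ T) (σ : Strat S A) (N : ℕ∞) :
    M.hitProb T σ s (N + 1) = ∑ p, M.stepProb σ s p * M.hitProb T (shift σ p) p.2 N := by
  rw [hitProb, tsum_hitsWithin_add_one hs N fun h => (probHist (M.withInit s) σ h : ℝ≥0∞)]
  refine Finset.sum_congr rfl fun p _ => ?_
  rw [hitProb, ← ENNReal.tsum_mul_left]
  refine tsum_congr fun h => ?_
  rw [probHist_withInit_cons, stepProb]
  push_cast
  rfl

lemma hitCost_add_one {s : S} (hs : s ∉ T) (σ : Strat S A) (N : ℕ∞) :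
    M.hitCost w T σ s (N + 1) = ∑ p, M.stepProb σ s p *
      (w p.1 * M.hitProb T (shift σ p) p.2 N + M.hitCost w T (shift σ p) p.2 N) := by
  rw [hitCost, tsum_hitsWithin_add_one hs N
    fun h => (probHist (M.withInit s) σ h : ℝ≥0∞) * tsHist w h]
  refine Finset.sum_congr rfl fun p _ => ?_
  rw [hitProb, hitCost, ← ENNReal.tsum_mul_left, ← ENNReal.tsum_add, ← ENNReal.tsum_mul_left]
  refine tsum_congr fun h => ?_
  rw [probHist_withInit_cons, tsHist, List.map_cons, List.sum_cons, ← tsHist, stepProb]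
  push_cast
  ring

lemma hitProb_eq_iSup (σ : Strat S A) (s : S) :
    M.hitProb T σ s ⊤ = ⨆ n : ℕ, M.hitProb T σ s n := by
  rw [hitProb, ← iUnion_hitsWithin]
  exact ENNReal.tsum_iUnion_eq_iSup_of_monotone (fun h => (probHist (M.withInit s) σ h : ℝ≥0∞))
    (monotone_hitsWithin s)

lemma hitCost_eq_iSup (σ : Strat S A) (s : S) :
    M.hitCost w T σ s ⊤ = ⨆ n : ℕ, M.hitCost w T σ s n := by
  rw [hitCost, ← iUnion_hitsWithin]
  exact ENNReal.tsum_iUnion_eq_iSup_of_monotone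
    (fun h => (probHist (M.withInit s) σ h : ℝ≥0∞) * tsHist w h) (monotone_hitsWithin s)

lemma hitProb_le_hitProb_top (σ : Strat S A) (s : S) (n : ℕ) :
    M.hitProb T σ s n ≤ M.hitProb T σ s ⊤ :=
  hitProb_eq_iSup (M := M) σ s ▸ le_iSup (fun n : ℕ => M.hitProb T σ s n) n

lemma hitProb_le_one {s : S} {σ : Strat S A} (hσ : IsStrategy (M.withInit s) σ) (N : ℕ∞) :
    M.hitProb T σ s N ≤ 1 := by
  have hitProb_nat_le_one (n : ℕ) :
      ∀ s σ, IsStrategy (M.withInit s) σ → M.hitProb T σ s n ≤ 1 := by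
    induction n with
    | zero =>
      intro s σ _
      by_cases hs : s ∈ T
      · exact (hitProb_of_mem hs σ _).le
      · rw [Nat.cast_zero, hitProb_zero hs]
        exact zero_le_one
    | succ n ih =>
      intro s σ hσ
      by_cases hs : s ∈ T
      · exact (hitProb_of_mem hs σ _).le
      rw [Nat.cast_succ, hitProb_add_one hs, ← sum_stepProb hσ]
      exact Finset.sum_le_sum fun p _ => mul_le_of_le_one_right' (ih _ _ (hσ.shift p))
  induction N using ENat.recTopCoe with
  | top => exact hitProb_eq_iSup σ s ▸ iSup_le fun n => hitProb_nat_le_one n s σ hσ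
  | coe n => exact hitProb_nat_le_one n s σ hσ

lemma expCost_eq_sum {s : S} (hs : s ∉ T) {σ : Strat S A} (hσ : IsStrategy (M.withInit s) σ) :
    M.expCost w T σ s = ∑ p, M.stepProb σ s p * (w p.1 + M.expCost w T (shift σ p) p.2) := by
  have hle (p : A × S) : M.hitProb T (shift σ p) p.2 ⊤ ≤ 1 := hitProb_le_one (hσ.shift p) ⊤
  rw [expCost, ← top_add (1 : ℕ∞), hitCost_add_one hs, hitProb_add_one hs,
    ENNReal.one_sub_sum_mul _ (sum_stepProb hσ) fun p _ => hle p, Finset.sum_mul,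
    ← Finset.sum_add_distrib]
  refine Finset.sum_congr rfl fun p _ => ?_
  rw [expCost, mul_assoc, ← mul_add, add_right_comm, ENNReal.mul_add_one_sub_mul_top (hle p)]
  ring

end Values

section Bellman

variable (M : MDP S A) (w : A → ℕ) (T : Finset S)

noncomputable def qValue (f : S → ℝ≥0∞) (s : S) (a : A) : ℝ≥0∞ :=
  w a + ∑ s', M.tr s a s' * f s'

open Classical in
noncomputable def bellman : (S → ℝ≥0∞) →o (S → ℝ≥0∞) where
  toFun f s := if s ∈ T then 0 else (M.avail s).inf' (M.avail_nonempty s) (M.qValue w f s)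
  monotone' f g hfg s := by
    by_cases hs : s ∈ T
    · simp [hs]
    · simp only [if_neg hs]
      refine Finset.le_inf' _ _ fun a ha => (Finset.inf'_le _ ha).trans ?_
      unfold qValue
      gcongr with s'
      exact hfg s'

noncomputable def optValue : S → ℝ≥0∞ := OrderHom.lfp (M.bellman w T)

variable {M w T}

lemma bellman_apply_of_mem (f : S → ℝ≥0∞) {s : S} (hs : s ∈ T) : M.bellman w T f s = 0 :=
  if_pos hs

lemma bellman_apply_of_notMem (f : S → ℝ≥0∞) {s : S} (hs : s ∉ T) :
    M.bellman w T f s = (M.avail s).inf' (M.avail_nonempty s) (M.qValue w f s) :=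
  if_neg hs

lemma optValue_of_notMem {s : S} (hs : s ∉ T) :
    M.optValue w T s = (M.avail s).inf' (M.avail_nonempty s) (M.qValue w (M.optValue w T) s) := by
  rw [← bellman_apply_of_notMem _ hs, optValue, OrderHom.map_lfp]

lemma sum_stepProb_mul_add {s : S} {σ : Strat S A} (hσ : IsStrategy (M.withInit s) σ)
    (f : S → ℝ≥0∞) :
    ∑ p, M.stepProb σ s p * (w p.1 + f p.2) = ∑ a, (σ [] a : ℝ≥0∞) * M.qValue w f s a := by
  rw [Fintype.sum_prod_type]
  refine Finset.sum_congr rfl fun a _ => ?_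
  by_cases ha : a ∈ M.avail s
  · have htr : ∑ s', (M.tr s a s' : ℝ≥0∞) = 1 := by
      rw [← ENNReal.ofNNReal_finsetSum, M.tr_sum s a ha, ENNReal.coe_one]
    simp_rw [stepProb, qValue, mul_assoc, ← Finset.mul_sum, mul_add, Finset.sum_add_distrib,
      ← Finset.sum_mul, htr, one_mul, mul_add]
  · simp [stepProb, (hσ []).1 a ha]

lemma optValue_le_expCost {s : S} {σ : Strat S A} (hσ : IsStrategy (M.withInit s) σ) :
    M.optValue w T s ≤ M.expCost w T σ s := by
  let g : S → ℝ≥0∞ := fun s => ⨅ (σ : Strat S A) (_ : IsStrategy (M.withInit s) σ),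
    M.expCost w T σ s
  have hg : M.bellman w T g ≤ g := fun s => le_iInf₂ fun σ hσ => by
    by_cases hs : s ∈ T
    · rw [bellman_apply_of_mem _ hs]
      exact zero_le
    calc M.bellman w T g s = (M.avail s).inf' (M.avail_nonempty s) (M.qValue w g s) :=
          bellman_apply_of_notMem _ hs
      _ ≤ ∑ a, (σ [] a : ℝ≥0∞) * M.qValue w g s a :=
          Finset.inf'_le_sum_mul _ _ hσ.sum_nil_eq_one fun a ha => by simp [(hσ []).1 a ha]
      _ = ∑ p, M.stepProb σ s p * (w p.1 + g p.2) := (sum_stepProb_mul_add hσ g).symm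
      _ ≤ ∑ p, M.stepProb σ s p * (w p.1 + M.expCost w T (shift σ p) p.2) := by
          gcongr with p
          exact iInf₂_le _ (hσ.shift p)
      _ = M.expCost w T σ s := (expCost_eq_sum hs hσ).symm
  exact OrderHom.lfp_le _ hg s |>.trans (iInf₂_le σ hσ)

end Bellman

section Greedy

variable (M : MDP S A) (w : A → ℕ) (T : Finset S)

noncomputable def greedyAction (s : S) : A :=
  ((M.avail s).exists_mem_eq_inf' (M.avail_nonempty s) (M.qValue w (M.optValue w T) s)).choose

open Classical in
noncomputable def greedyStrat (s : S) : Strat S A :=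
  fun h a => if a = M.greedyAction w T (lastState (M.withInit s) h) then 1 else 0

variable {M w T}

lemma greedyAction_mem (s : S) : M.greedyAction w T s ∈ M.avail s :=
  ((M.avail s).exists_mem_eq_inf' (M.avail_nonempty s) _).choose_spec.1

lemma optValue_eq_qValue_greedyAction {s : S} (hs : s ∉ T) :
    M.optValue w T s = M.qValue w (M.optValue w T) s (M.greedyAction w T s) := by
  rw [optValue_of_notMem hs]
  exact ((M.avail s).exists_mem_eq_inf' (M.avail_nonempty s) _).choose_spec.2

lemma isStrategy_greedyStrat (s : S) : IsStrategy (M.withInit s) (M.greedyStrat w T s) := by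
  classical
  refine fun h => ⟨fun a ha => if_neg fun he => ha (by rw [he]; exact greedyAction_mem _), ?_⟩
  unfold greedyStrat
  rw [Finset.sum_ite_eq']
  simp

lemma isPure_greedyStrat (s : S) : IsPure (M.greedyStrat w T s) :=
  fun _ => ⟨_, if_pos rfl⟩

lemma isMemoryless_greedyStrat (s : S) : IsMemoryless (M.withInit s) (M.greedyStrat w T s) :=
  fun h h' he => by
    unfold greedyStrat
    rw [he]

lemma shift_greedyStrat (s : S) (p : A × S) :
    shift (M.greedyStrat w T s) p = M.greedyStrat w T p.2 := by
  funext h a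
  simp only [shift, greedyStrat]
  rw [lastState_withInit_cons]

lemma sum_stepProb_greedyStrat (s : S) (X : A × S → ℝ≥0∞) :
    ∑ p, M.stepProb (M.greedyStrat w T s) s p * X p
      = ∑ s', M.tr s (M.greedyAction w T s) s' * X (M.greedyAction w T s, s') := by
  classical
  rw [Fintype.sum_prod_type, Finset.sum_eq_single (M.greedyAction w T s)]
  · simp [stepProb, greedyStrat, lastState, withInit]
  · intro a _ ha
    simp [stepProb, greedyStrat, lastState, withInit, ha]
  · simp

lemma hitCost_add_mul_le_optValue (hw : ∀ a, 1 ≤ w a) (n : ℕ) (s : S) :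
    M.hitCost w T (M.greedyStrat w T s) s n + n * (1 - M.hitProb T (M.greedyStrat w T s) s n)
      ≤ M.optValue w T s := by
  induction n generalizing s with
  | zero =>
    by_cases hs : s ∈ T
    · simp [hitCost_of_mem hs]
    · simp [hitCost_zero hs]
  | succ n ih =>
    by_cases hs : s ∈ T
    · simp [hitCost_of_mem hs, hitProb_of_mem hs]
    have htr : ∑ s', (M.tr s (M.greedyAction w T s) s' : ℝ≥0∞) = 1 := by
      rw [← ENNReal.ofNNReal_finsetSum, M.tr_sum s _ (greedyAction_mem s), ENNReal.coe_one]
    have hle (s' : S) : M.hitProb T (M.greedyStrat w T s') s' n ≤ 1 :=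
      hitProb_le_one (isStrategy_greedyStrat s') n
    rw [Nat.cast_succ, hitCost_add_one hs, hitProb_add_one hs, sum_stepProb_greedyStrat,
      sum_stepProb_greedyStrat]
    simp only [shift_greedyStrat]
    set a := M.greedyAction w T s
    rw [ENNReal.one_sub_sum_mul _ htr fun s' _ => hle s', Finset.mul_sum,
      ← Finset.sum_add_distrib, optValue_eq_qValue_greedyAction hs, qValue]
    calc _ ≤ ∑ s', (M.tr s a s' : ℝ≥0∞) * (w a + M.optValue w T s') := by
          refine Finset.sum_le_sum fun s' _ => ?_
          set H := M.hitProb T (M.greedyStrat w T s') s' n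
          calc _ = (M.tr s a s' : ℝ≥0∞) * ((w a * H + (1 - H))
                + (M.hitCost w T (M.greedyStrat w T s') s' n + n * (1 - H))) := by push_cast; ring
            _ ≤ _ := by
              gcongr
              -- the unit of missed probability added by the extra step is paid by `w a ≥ 1`
              · exact ENNReal.mul_add_one_sub_le (by exact_mod_cast hw a) (hle s')
              · exact ih s'
      _ = w a + ∑ s', (M.tr s a s' : ℝ≥0∞) * M.optValue w T s' := by
          simp_rw [mul_add, Finset.sum_add_distrib, ← Finset.sum_mul, htr, one_mul]

lemma expCost_greedyStrat_le_optValue (hw : ∀ a, 1 ≤ w a) (s : S) :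
    M.expCost w T (M.greedyStrat w T s) s ≤ M.optValue w T s := by
  rcases eq_or_ne (M.optValue w T s) ⊤ with hV | hV
  · exact hV ▸ le_top
  have hcost : M.hitCost w T (M.greedyStrat w T s) s ⊤ ≤ M.optValue w T s :=
    hitCost_eq_iSup (M := M) _ s ▸
      iSup_le fun n => le_self_add.trans (hitCost_add_mul_le_optValue hw n s)
  have hmiss : 1 - M.hitProb T (M.greedyStrat w T s) s ⊤ = 0 :=
    ENNReal.eq_zero_of_forall_natCast_mul_le hV fun n =>
      calc (n : ℝ≥0∞) * (1 - M.hitProb T (M.greedyStrat w T s) s ⊤)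
          ≤ n * (1 - M.hitProb T (M.greedyStrat w T s) s n) := by
            gcongr
            exact hitProb_le_hitProb_top _ s n
        _ ≤ _ := le_add_self
        _ ≤ M.optValue w T s := hitCost_add_mul_le_optValue hw n s
  rw [expCost, hmiss, zero_mul, add_zero]
  exact hcost

end Greedy

end MDP

/-- For every finite MDP with strictly positive integer weights and every
target set `T`, there is a pure memoryless strategy that is optimal for the expected
truncated sum: its expectation is at most that of any other strategy. -/
theorem stmt0 {S A : Type} [Fintype S] [Fintype A] (M : MDP S A)
    (w : A → ℕ) (hw : ∀ a, 1 ≤ w a) (T : Finset S) :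
    ∃ σstar : Strat S A, IsStrategy M σstar ∧ IsPure σstar ∧ IsMemoryless M σstar ∧
      ∀ σ : Strat S A, IsStrategy M σ → expTS M σstar w T ≤ expTS M σ w T := by
  refine ⟨M.greedyStrat w T M.init, M.isStrategy_greedyStrat M.init, M.isPure_greedyStrat M.init,
    M.isMemoryless_greedyStrat M.init, fun σ hσ => ?_⟩
  calc expTS M (M.greedyStrat w T M.init) w T
      = M.expCost w T (M.greedyStrat w T M.init) M.init := MDP.expTS_withInit _ _
    _ ≤ M.optValue w T M.init := MDP.expCost_greedyStrat_le_optValue hw M.init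
    _ ≤ M.expCost w T σ M.init := MDP.optValue_le_expCost hσ
    _ = expTS M σ w T := (MDP.expTS_withInit σ M.init).symm
end

section
/- For every finite MDP D = (S, s_init, A, δ, w) with strictly positive integer weights, every target set T ⊆ S and every threshold ℓ ∈ ℕ, there exists a pure strategy σ* whose choice after a history s₁a₁…s_n depends only on the pair (s_n, min(ℓ+1, Σ_{i=1}^{n-1} w(a_i))) — hence a pure finite-memory strategy with at most ℓ+2 memory states — such that for every strategy σ, P^{σ*}(TS^T ≤ ℓ) ≥ P^{σ}(TS^T ≤ ℓ). -/
open scoped NNReal ENNReal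

/-!
Because every weight is at least one, the remaining budget `k = ℓ - Σ w` strictly decreases
along each step, so the optimal probability `optVal k s` of hitting `T` within budget `k` from
`s` is given by the Bellman recursion: `1` on `T`, and otherwise the maximum over available
actions `a` with `w a ≤ k` of `∑ s', δ(s, a)(s') · optVal (k - w a) s'`. Unfolding the first step
of an arbitrary strategy shows, by strong induction on `k`, that it achieves a convex
combination of these action values, hence at most `optVal`; the strategy that plays a
maximising action for the current state and remaining budget achieves `optVal`. Its choice
depends on the history only through the last state and `ℓ - Σ w`, which is determined by
`min (ℓ + 1) (Σ w)`.
-/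

lemma ENNReal.tsum_list_eq_nil_add_tsum_cons {α : Type*} (f : List α → ℝ≥0∞) :
    ∑' l, f l = f [] + ∑' p : α × List α, f (p.1 :: p.2) := by
  classical
  rw [ENNReal.tsum_eq_add_tsum_ite []]
  congr 1
  have hcons : Function.Injective fun p : α × List α => p.1 :: p.2 :=
    fun p q h => Prod.ext (List.cons.inj h).1 (List.cons.inj h).2
  refine (hcons.tsum_eq ?_).symm.trans (by simp)
  rintro (_ | ⟨a, l⟩) hl
  · simp at hl
  · exact ⟨(a, l), rfl⟩

lemma ENNReal.sum_mul_le_sup {ι : Type*} [Fintype ι] {s : Finset ι} {p : ι → ℝ≥0}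
    (hp : ∀ i ∉ s, p i = 0) (hp1 : ∑ i, p i = 1) (f : ι → ℝ≥0∞) :
    ∑ i, (p i : ℝ≥0∞) * f i ≤ s.sup f :=
  calc ∑ i, (p i : ℝ≥0∞) * f i ≤ ∑ i, (p i : ℝ≥0∞) * s.sup f := by
        refine Finset.sum_le_sum fun i _ => ?_
        by_cases hi : i ∈ s
        · gcongr
          exact Finset.le_sup hi
        · simp [hp i hi]
    _ = s.sup f := by
        rw [← Finset.sum_mul, ← ENNReal.ofNNReal_finsetSum, hp1, ENNReal.coe_one, one_mul]

namespace MDP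

variable {S A : Type} [Fintype S] [Fintype A]

@[simp] lemma withInit_init (M : MDP S A) (s : S) : (M.withInit s).init = s := rfl

@[simp] lemma withInit_self (M : MDP S A) : M.withInit M.init = M := rfl

@[simp] lemma withInit_withInit (M : MDP S A) (s s' : S) :
    (M.withInit s).withInit s' = M.withInit s' := rfl

end MDP

lemma tsHist_cons {S A : Type} (w : A → ℕ) (p : A × S) (h : List (A × S)) :
    tsHist w (p :: h) = w p.1 + tsHist w h := by
  simp [tsHist]

section Histories

variable {S A : Type} [Fintype S] [Fintype A]

lemma lastState_cons (M : MDP S A) (p : A × S) (h : List (A × S)) :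
    lastState M (p :: h) = lastState (M.withInit p.2) h := by
  cases h <;> simp [lastState, List.getLast?_cons]

def shiftStrat (σ : Strat S A) (p : A × S) : Strat S A := fun h => σ (p :: h)

lemma IsStrategy.shiftStrat {M : MDP S A} {s : S} {σ : Strat S A}
    (hσ : IsStrategy (M.withInit s) σ) (p : A × S) :
    IsStrategy (M.withInit p.2) (shiftStrat σ p) := by
  intro h
  have := hσ (p :: h)
  rwa [lastState_cons, MDP.withInit_withInit] at this

lemma probFrom_cons_left (M : MDP S A) (σ : Strat S A) (p : A × S) (pre rest : List (A × S)) :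
    probFrom M σ (p :: pre) rest = probFrom (M.withInit p.2) (shiftStrat σ p) pre rest := by
  induction rest generalizing pre with
  | nil => rfl
  | cons q rest ih =>
    simp only [probFrom, lastState_cons, List.cons_append, ih]
    rfl

lemma probHist_cons (M : MDP S A) (σ : Strat S A) (p : A × S) (h : List (A × S)) :
    probHist M σ (p :: h) =
      σ [] p.1 * M.tr M.init p.1 p.2 * probHist (M.withInit p.2) (shiftStrat σ p) h := by
  simp only [probHist, probFrom, List.nil_append, probFrom_cons_left]
  rfl

lemma hits_nil_iff (M : MDP S A) (T : Finset S) :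
    Hits M T ([] : List (A × S)) ↔ M.init ∈ T := by
  simp [Hits, stateSeq]

lemma hits_cons_iff (M : MDP S A) (T : Finset S) (p : A × S) (h : List (A × S)) :
    Hits M T (p :: h) ↔ M.init ∉ T ∧ Hits (M.withInit p.2) T h := by
  simp only [Hits, stateSeq, List.map_cons, ne_eq, reduceCtorEq, not_false_eq_true,
    List.getLast_cons, List.dropLast_cons_of_ne_nil, List.mem_cons, forall_eq_or_imp,
    MDP.withInit_init]
  tauto

end Histories

section ActionValue

variable {S A : Type} [Fintype S] [Fintype A]

noncomputable def actionValue (M : MDP S A) (w : A → ℕ) (v : ℕ → S → ℝ≥0∞) (k : ℕ)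
    (s : S) (a : A) : ℝ≥0∞ :=
  if w a ≤ k then ∑ s', (M.tr s a s' : ℝ≥0∞) * v (k - w a) s' else 0

@[simp] lemma actionValue_withInit (M : MDP S A) (s : S) :
    actionValue (M.withInit s) = actionValue M := rfl

lemma actionValue_mono (M : MDP S A) (w : A → ℕ)
    {v v' : ℕ → S → ℝ≥0∞} {k : ℕ} {s : S} {a : A}
    (h : w a ≤ k → ∀ s', v (k - w a) s' ≤ v' (k - w a) s') :
    actionValue M w v k s a ≤ actionValue M w v' k s a := by
  unfold actionValue
  split_ifs with hwa
  · gcongr with s'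
    exact h hwa s'
  · rfl

end ActionValue

section Recursion

open Classical

variable {S A : Type} [Fintype S] [Fintype A]

lemma probTSLe_eq_tsum_ite (M : MDP S A) (σ : Strat S A) (w : A → ℕ) (T : Finset S) (k : ℕ) :
    probTSLe M σ w T k =
      ∑' h, if Hits M T h ∧ tsHist w h ≤ k then (probHist M σ h : ℝ≥0∞) else 0 :=
  (tsum_subtype {h | Hits M T h ∧ tsHist w h ≤ k} fun h => (probHist M σ h : ℝ≥0∞)).trans
    (tsum_congr fun h => by simp only [Set.indicator_apply, Set.mem_ofPred_eq])

lemma ite_hits_cons (M : MDP S A) (σ : Strat S A) (w : A → ℕ) (T : Finset S) (k : ℕ)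
    (hinit : M.init ∉ T) (a : A) (s' : S) (h : List (A × S)) :
    (if Hits M T ((a, s') :: h) ∧ tsHist w ((a, s') :: h) ≤ k then
      (probHist M σ ((a, s') :: h) : ℝ≥0∞) else 0) =
    σ [] a * M.tr M.init a s' * if w a ≤ k then
      (if Hits (M.withInit s') T h ∧ tsHist w h ≤ k - w a then
        (probHist (M.withInit s') (shiftStrat σ (a, s')) h : ℝ≥0∞) else 0) else 0 := by
  simp only [hits_cons_iff, hinit, not_false_eq_true, true_and, tsHist_cons, probHist_cons]
  by_cases hwa : w a ≤ k
  · have : w a + tsHist w h ≤ k ↔ tsHist w h ≤ k - w a := by omega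
    simp only [hwa, this, if_true, mul_ite, mul_zero, ENNReal.coe_mul]
  · simp [hwa, show ¬ w a + tsHist w h ≤ k by omega]

theorem probTSLe_eq (M : MDP S A) (σ : Strat S A) (w : A → ℕ) (T : Finset S) (k : ℕ) :
    probTSLe M σ w T k = if M.init ∈ T then 1 else
      ∑ a, (σ [] a : ℝ≥0∞) * actionValue M w
        (fun j s' => probTSLe (M.withInit s') (shiftStrat σ (a, s')) w T j) k M.init a := by
  rw [probTSLe_eq_tsum_ite, ENNReal.tsum_list_eq_nil_add_tsum_cons]
  by_cases hinit : M.init ∈ T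
  · simp [hinit, hits_nil_iff, hits_cons_iff, tsHist, probHist, probFrom]
  · simp only [hinit, hits_nil_iff, if_false, ENNReal.tsum_prod', ite_hits_cons _ _ _ _ _ hinit,
      ENNReal.tsum_mul_left, tsum_fintype, actionValue, probTSLe_eq_tsum_ite, false_and, zero_add,
      Fintype.sum_prod_type]
    refine Finset.sum_congr rfl fun a _ => ?_
    split_ifs <;> simp [Finset.mul_sum, mul_assoc]

end Recursion

section Optimal

open Classical

variable {S A : Type} [Fintype S] [Fintype A] (M : MDP S A) (w : A → ℕ) (T : Finset S)

-- The guard `0 < w a` only makes the recursion well founded; `optVal_eq` drops it.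
noncomputable def optVal : ℕ → S → ℝ≥0∞
  | k, s => if s ∈ T then 1 else (M.avail s).sup fun a =>
      if _ : 0 < w a ∧ w a ≤ k then ∑ s', (M.tr s a s' : ℝ≥0∞) * optVal (k - w a) s'
      else 0
  termination_by k => k
  decreasing_by omega

variable {M w T} in
lemma optVal_eq (hw : ∀ a, 1 ≤ w a) (k : ℕ) (s : S) :
    optVal M w T k s =
      if s ∈ T then 1 else (M.avail s).sup (actionValue M w (optVal M w T) k s) := by
  rw [optVal]
  congr 1
  refine Finset.sup_congr rfl fun a _ => ?_
  have : 0 < w a := hw a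
  simp [actionValue, this]

noncomputable def optAct (k : ℕ) (s : S) : A :=
  (Finset.exists_mem_eq_sup (M.avail s) (M.avail_nonempty s)
    (actionValue M w (optVal M w T) k s)).choose

lemma optAct_mem (k : ℕ) (s : S) : optAct M w T k s ∈ M.avail s :=
  (Finset.exists_mem_eq_sup (M.avail s) (M.avail_nonempty s) _).choose_spec.1

lemma sup_actionValue_optVal (k : ℕ) (s : S) :
    (M.avail s).sup (actionValue M w (optVal M w T) k s) =
      actionValue M w (optVal M w T) k s (optAct M w T k s) :=
  (Finset.exists_mem_eq_sup (M.avail s) (M.avail_nonempty s) _).choose_spec.2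

variable {M w T} in
theorem probTSLe_le_optVal (hw : ∀ a, 1 ≤ w a) (k : ℕ) (s : S) (σ : Strat S A)
    (hσ : IsStrategy (M.withInit s) σ) :
    probTSLe (M.withInit s) σ w T k ≤ optVal M w T k s := by
  induction k using Nat.strong_induction_on generalizing s σ with
  | _ k ih =>
  rw [probTSLe_eq, optVal_eq hw, MDP.withInit_init]
  split_ifs
  · rfl
  calc _ ≤ ∑ a, (σ [] a : ℝ≥0∞) * actionValue M w (optVal M w T) k s a := by
        gcongr with a
        exact actionValue_mono _ _ fun hwa s' =>
          ih _ (by have := hw a; omega) s' _ (hσ.shiftStrat (a, s'))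
    _ ≤ _ := ENNReal.sum_mul_le_sup (hσ []).1 (hσ []).2 _

noncomputable def greedyStrat (s : S) (b : ℕ) : Strat S A := fun h a =>
  if a = optAct M w T (b - tsHist w h) (lastState (M.withInit s) h) then 1 else 0

lemma greedyStrat_isStrategy (s : S) (b : ℕ) :
    IsStrategy (M.withInit s) (greedyStrat M w T s b) := by
  intro h
  refine ⟨fun a ha => if_neg ?_, by simp [greedyStrat]⟩
  rintro rfl
  exact ha (optAct_mem M w T _ _)

lemma greedyStrat_isPure (s : S) (b : ℕ) : IsPure (greedyStrat M w T s b) :=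
  fun _ => ⟨_, if_pos rfl⟩

lemma greedyStrat_nil (s : S) (b : ℕ) (a : A) :
    greedyStrat M w T s b [] a = if a = optAct M w T b s then 1 else 0 := by
  simp [greedyStrat, lastState, tsHist]

lemma shiftStrat_greedyStrat (s : S) (b : ℕ) (p : A × S) :
    shiftStrat (greedyStrat M w T s b) p = greedyStrat M w T p.2 (b - w p.1) := by
  funext h a
  simp only [shiftStrat, greedyStrat, lastState_cons, MDP.withInit_withInit, tsHist_cons,
    Nat.sub_sub]

variable {M w T} in
theorem optVal_le_probTSLe_greedyStrat (hw : ∀ a, 1 ≤ w a) (k : ℕ) (s : S) :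
    optVal M w T k s ≤ probTSLe (M.withInit s) (greedyStrat M w T s k) w T k := by
  induction k using Nat.strong_induction_on generalizing s with
  | _ k ih =>
  rw [probTSLe_eq, optVal_eq hw, MDP.withInit_init]
  split_ifs
  · rfl
  set a₀ := optAct M w T k s
  calc (M.avail s).sup (actionValue M w (optVal M w T) k s)
      = actionValue M w (optVal M w T) k s a₀ := sup_actionValue_optVal M w T k s
    _ ≤ actionValue M w
          (fun j s' => probTSLe (M.withInit s') (greedyStrat M w T s' (k - w a₀)) w T j)
          k s a₀ :=
        actionValue_mono _ _ fun hwa s' => ih _ (by have := hw a₀; omega) s'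
    _ = _ := by
        simp [a₀, greedyStrat_nil, shiftStrat_greedyStrat, apply_ite ENNReal.ofNNReal]

end Optimal

/-- For every finite MDP with strictly positive integer weights, target
set `T` and threshold `ℓ`, there is a pure strategy whose choice only depends on the last
state of the history together with `min (ℓ+1) (accumulated weight)` — hence a pure
finite-memory strategy with at most `ℓ+2` memory states — which maximizes the probability
that the truncated sum is at most `ℓ`. -/
theorem stmt1 {S A : Type} [Fintype S] [Fintype A] (M : MDP S A)
    (w : A → ℕ) (hw : ∀ a, 1 ≤ w a) (T : Finset S) (ℓ : ℕ) :
    ∃ σstar : Strat S A, IsStrategy M σstar ∧ IsPure σstar ∧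
      (∀ h h' : List (A × S), lastState M h = lastState M h' →
        min (ℓ + 1) (tsHist w h) = min (ℓ + 1) (tsHist w h') → σstar h = σstar h') ∧
      ∀ σ : Strat S A, IsStrategy M σ →
        probTSLe M σ w T ℓ ≤ probTSLe M σstar w T ℓ := by
  refine ⟨greedyStrat M w T M.init ℓ, greedyStrat_isStrategy M w T M.init ℓ,
    greedyStrat_isPure M w T M.init ℓ, ?_, fun σ hσ => ?_⟩
  · intro h h' hlast hmin
    have hbudget : ℓ - tsHist w h = ℓ - tsHist w h' := by omega
    unfold greedyStrat
    rw [MDP.withInit_self, hlast, hbudget]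
  · exact (probTSLe_le_optVal hw ℓ M.init σ hσ).trans
      (optVal_le_probTSLe_greedyStrat hw ℓ M.init)
end

section
/- For every finite MDP D = (S, s_init, A, δ, w) with strictly positive integer weights, every target set T ⊆ S and every threshold ℓ ∈ ℕ: if there exists a strategy σ such that every run consistent with σ satisfies TS^T(ρ) ≤ ℓ, then there exists a pure memoryless strategy σ' such that every run consistent with σ' satisfies TS^T(ρ) ≤ ℓ. -/
open scoped NNReal ENNReal

/-! Say that `s` surely reaches `T` within budget `b` if `s ∈ T`, or some available action of
weight at most `b` leads, whatever its outcome, to states that surely reach `T` within the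
remaining budget. This characterises the winning pairs (state, remaining budget):
* if `init` does not surely reach `T` within `ℓ`, then against any strategy, resolving the
  probabilistic choices adversarially keeps the pair losing forever, so `T` is never hit
  within budget `ℓ`;
* otherwise, in each state play the action witnessing sure reachability for the least budget
  that works there; it then works for every larger budget, so this pure memoryless strategy
  keeps the pair winning, and as every weight is at least one the budget forces a visit
  to `T`. -/

theorem exists_seq_of_invariant_step {α : Type*} (P : List α → Prop) (Q : List α → α → Prop)
    (h0 : P []) (hstep : ∀ h, P h → ∃ a, Q h a ∧ P (h ++ [a])) :
    ∃ ρ : ℕ → α, ∀ n, P (List.ofFn fun i : Fin n => ρ i) ∧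
      Q (List.ofFn fun i : Fin n => ρ i) (ρ n) := by
  choose f hfQ hfP using hstep
  let hist : ℕ → {h // P h} :=
    fun n => Nat.rec ⟨[], h0⟩ (fun _ h => ⟨h.1 ++ [f h.1 h.2], hfP h.1 h.2⟩) n
  refine ⟨fun n => f (hist n).1 (hist n).2, fun n => ?_⟩
  have hhist : (hist n).1 = List.ofFn fun i : Fin n => f (hist i).1 (hist i).2 := by
    induction n with
    | zero => rfl
    | succ n ih =>
      simp only [List.ofFn_succ_last, Fin.val_castSucc, Fin.val_last, ← ih]
      rfl
  rw [← hhist]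
  exact ⟨(hist n).2, hfQ _ _⟩

section

variable {S A : Type}

lemma tsHist_append (w : A → ℕ) (h : List (A × S)) (p : A × S) :
    tsHist w (h ++ [p]) = tsHist w h + w p.1 := by
  simp [tsHist]

lemma tsHist_ofFn (w : A → ℕ) (ρ : ℕ → A × S) (n : ℕ) :
    tsHist w (List.ofFn fun i : Fin n => ρ i) = ∑ i ∈ Finset.range n, w (ρ i).1 := by
  induction n with
  | zero => rfl
  | succ n ih =>
    simp only [List.ofFn_succ_last, Fin.val_castSucc, Fin.val_last, tsHist_append, ih,
      Finset.sum_range_succ]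

variable [Fintype S] [Fintype A]

lemma lastState_append (M : MDP S A) (h : List (A × S)) (p : A × S) :
    lastState M (h ++ [p]) = p.2 := by
  simp [lastState]

lemma lastState_ofFn (M : MDP S A) (ρ : ℕ → A × S) (n : ℕ) :
    lastState M (List.ofFn fun i : Fin n => ρ i) = stateAt M ρ n := by
  cases n with
  | zero => rfl
  | succ n => rw [List.ofFn_succ_last, lastState_append]; rfl

lemma tsRun_le_iff {M : MDP S A} {w : A → ℕ} {T : Finset S} {ρ : ℕ → A × S} {ℓ : ℕ} :
    tsRun M w T ρ ≤ ℓ ↔ ∃ n, stateAt M ρ n ∈ T ∧ ∑ i ∈ Finset.range n, w (ρ i).1 ≤ ℓ := by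
  classical
  unfold tsRun
  split_ifs with hT
  · rw [Nat.cast_le]
    refine ⟨fun h => ⟨_, Nat.find_spec hT, h⟩, fun ⟨n, hn, hle⟩ => le_trans ?_ hle⟩
    exact Finset.sum_le_sum_of_subset (Finset.range_mono (Nat.find_min' hT hn))
  · simp only [top_le_iff, ENNReal.natCast_ne_top, false_iff]
    exact fun ⟨n, hn, _⟩ => hT ⟨n, hn⟩

lemma MDP.exists_tr_pos (M : MDP S A) {s : S} {a : A} (ha : a ∈ M.avail s) :
    ∃ s', 0 < M.tr s a s' := by
  by_contra! h
  simpa [nonpos_iff_eq_zero.mp (h _)] using M.tr_sum s a ha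

lemma IsStrategy.exists_pos {M : MDP S A} {σ : Strat S A} (hσ : IsStrategy M σ)
    (h : List (A × S)) : ∃ a, 0 < σ h a := by
  by_contra! h0
  simpa [nonpos_iff_eq_zero.mp (h0 _)] using (hσ h).2

lemma IsStrategy.mem_avail_of_pos {M : MDP S A} {σ : Strat S A} (hσ : IsStrategy M σ)
    {h : List (A × S)} {a : A} (ha : 0 < σ h a) : a ∈ M.avail (lastState M h) := by
  by_contra hna
  exact ha.ne' ((hσ h).1 a hna)

inductive SurelyReaches (M : MDP S A) (w : A → ℕ) (T : Finset S) : ℕ → S → Prop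
  | target {b : ℕ} {s : S} (hs : s ∈ T) : SurelyReaches M w T b s
  | step {b : ℕ} {s : S} (a : A) (ha : a ∈ M.avail s) (hwa : w a ≤ b)
      (hsucc : ∀ s', 0 < M.tr s a s' → SurelyReaches M w T (b - w a) s') :
      SurelyReaches M w T b s

namespace SurelyReaches

variable {M : MDP S A} {w : A → ℕ} {T : Finset S}

lemma mono {b : ℕ} {s : S} (h : SurelyReaches M w T b s) {b' : ℕ} (hb : b ≤ b') :
    SurelyReaches M w T b' s := by
  induction h generalizing b' with
  | target hs => exact .target hs
  | step a ha hwa _ ih => exact .step a ha (hwa.trans hb) fun s' hs' => ih s' hs' (by omega)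

lemma exists_succ_not_of_not {b : ℕ} {s : S} (h : ¬ SurelyReaches M w T b s) {a : A}
    (ha : a ∈ M.avail s) (hwa : w a ≤ b) :
    ∃ s', 0 < M.tr s a s' ∧ ¬ SurelyReaches M w T (b - w a) s' := by
  by_contra! hall
  exact h (.step a ha hwa hall)

lemma exists_uniform_action (s : S) :
    ∃ a ∈ M.avail s, s ∉ T → ∀ b, SurelyReaches M w T b s →
      w a ≤ b ∧ ∀ s', 0 < M.tr s a s' → SurelyReaches M w T (b - w a) s' := by
  classical
  by_cases hex : ∃ b, SurelyReaches M w T b s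
  · cases Nat.find_spec hex with
    | target hs => exact ⟨_, (M.avail_nonempty s).choose_spec, fun hsT => absurd hs hsT⟩
    | step a ha hwa hsucc =>
      refine ⟨a, ha, fun _ b hb => ?_⟩
      have hmin : Nat.find hex ≤ b := Nat.find_min' hex hb
      exact ⟨hwa.trans hmin, fun s' hs' => (hsucc s' hs').mono (by omega)⟩
  · push Not at hex
    exact ⟨_, (M.avail_nonempty s).choose_spec, fun _ b hb => absurd hb (hex b)⟩

end SurelyReaches

def KeepsSurelyReaching (M : MDP S A) (w : A → ℕ) (T : Finset S) (act : S → A) : Prop :=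
  ∀ s ∉ T, ∀ b, SurelyReaches M w T b s →
    w (act s) ≤ b ∧ ∀ s', 0 < M.tr s (act s) s' → SurelyReaches M w T (b - w (act s)) s'

section Adversary

variable {M : MDP S A} {σ : Strat S A} {w : A → ℕ} {T : Finset S} {ℓ : ℕ}

lemma exists_consistent_run_of_not_surelyReaches (hσ : IsStrategy M σ)
    (hinit : ¬ SurelyReaches M w T ℓ M.init) :
    ∃ ρ, Consistent M σ ρ ∧ ∀ n, ∑ i ∈ Finset.range n, w (ρ i).1 ≤ ℓ →
      ¬ SurelyReaches M w T (ℓ - ∑ i ∈ Finset.range n, w (ρ i).1) (stateAt M ρ n) := by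
  have hstep : ∀ h : List (A × S),
      (tsHist w h ≤ ℓ → ¬ SurelyReaches M w T (ℓ - tsHist w h) (lastState M h)) →
      ∃ p : A × S,
        (p.1 ∈ M.avail (lastState M h) ∧ 0 < σ h p.1 ∧ 0 < M.tr (lastState M h) p.1 p.2) ∧
        (tsHist w (h ++ [p]) ≤ ℓ →
          ¬ SurelyReaches M w T (ℓ - tsHist w (h ++ [p])) (lastState M (h ++ [p]))) := by
    intro h hbad
    obtain ⟨a, hσa⟩ := hσ.exists_pos h
    have ha := hσ.mem_avail_of_pos hσa
    simp only [tsHist_append, lastState_append]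
    by_cases hwa : tsHist w h + w a ≤ ℓ
    · obtain ⟨s', hs', hns'⟩ :=
        SurelyReaches.exists_succ_not_of_not (hbad (by omega)) ha (by omega)
      exact ⟨(a, s'), ⟨ha, hσa, hs'⟩, fun _ => by rwa [Nat.sub_add_eq]⟩
    · obtain ⟨s', hs'⟩ := M.exists_tr_pos ha
      exact ⟨(a, s'), ⟨ha, hσa, hs'⟩, fun h' => absurd h' hwa⟩
  obtain ⟨ρ, hρ⟩ := exists_seq_of_invariant_step _ _ (fun _ => hinit) hstep
  refine ⟨ρ, fun n => ?_, fun n => ?_⟩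
  · simpa only [lastState_ofFn] using (hρ n).2
  · simpa only [lastState_ofFn, tsHist_ofFn] using (hρ n).1

lemma surelyReaches_init (hσ : IsStrategy M σ)
    (hσℓ : ∀ ρ, Consistent M σ ρ → tsRun M w T ρ ≤ ℓ) :
    SurelyReaches M w T ℓ M.init := by
  by_contra hinit
  obtain ⟨ρ, hρ, hbad⟩ := exists_consistent_run_of_not_surelyReaches hσ hinit
  obtain ⟨n, hnT, hn⟩ := tsRun_le_iff.mp (hσℓ ρ hρ)
  exact hbad n hn (.target hnT)

end Adversary

def positional [DecidableEq A] (M : MDP S A) (act : S → A) : Strat S A :=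
  fun h a => if a = act (lastState M h) then 1 else 0

section Positional

variable [DecidableEq A] {M : MDP S A} {act : S → A}

lemma isStrategy_positional (hact : ∀ s, act s ∈ M.avail s) :
    IsStrategy M (positional M act) := by
  refine fun h => ⟨fun a ha => if_neg ?_, by simp [positional]⟩
  rintro rfl
  exact ha (hact _)

lemma isPure_positional : IsPure (positional M act) :=
  fun _ => ⟨_, if_pos rfl⟩

lemma isMemoryless_positional : IsMemoryless M (positional M act) := by
  intro h h' hh
  unfold positional
  rw [hh]

lemma Consistent.fst_eq_of_positional {ρ : ℕ → A × S}
    (hρ : Consistent M (positional M act) ρ) (n : ℕ) : (ρ n).1 = act (stateAt M ρ n) := by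
  have hpos := (hρ n).2.1
  rw [positional, lastState_ofFn] at hpos
  by_contra hne
  simp [hne] at hpos

variable {w : A → ℕ} {T : Finset S} {ℓ : ℕ}

lemma surelyReaches_stateAt_of_positional
    (hact : KeepsSurelyReaching M w T act)
    (hinit : SurelyReaches M w T ℓ M.init) {ρ : ℕ → A × S}
    (hρ : Consistent M (positional M act) ρ) (n : ℕ) (hn : ∀ i < n, stateAt M ρ i ∉ T) :
    ∑ i ∈ Finset.range n, w (ρ i).1 ≤ ℓ ∧
      SurelyReaches M w T (ℓ - ∑ i ∈ Finset.range n, w (ρ i).1) (stateAt M ρ n) := by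
  induction n with
  | zero => exact ⟨by simp, by simpa [stateAt] using hinit⟩
  | succ n ih =>
    obtain ⟨hle, hreach⟩ := ih fun i hi => hn i (by omega)
    obtain ⟨hwa, hsucc⟩ := hact _ (hn n (by omega)) _ hreach
    rw [← hρ.fst_eq_of_positional n] at hwa hsucc
    rw [Finset.sum_range_succ, Nat.sub_add_eq]
    exact ⟨by omega, hsucc _ (hρ n).2.2⟩

lemma tsRun_le_of_positional (hw : ∀ a, 1 ≤ w a)
    (hact : KeepsSurelyReaching M w T act)
    (hinit : SurelyReaches M w T ℓ M.init) {ρ : ℕ → A × S}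
    (hρ : Consistent M (positional M act) ρ) :
    tsRun M w T ρ ≤ ℓ := by
  classical
  have hbudget := surelyReaches_stateAt_of_positional hact hinit hρ
  have hT : ∃ n, stateAt M ρ n ∈ T := by
    by_contra! hnever
    have hle := (hbudget (ℓ + 1) fun i _ => hnever i).1
    have hge : ℓ + 1 ≤ ∑ i ∈ Finset.range (ℓ + 1), w (ρ i).1 := by
      simpa using Finset.card_nsmul_le_sum (Finset.range (ℓ + 1)) _ 1 fun i _ => hw (ρ i).1
    omega
  exact tsRun_le_iff.mpr
    ⟨_, Nat.find_spec hT, (hbudget _ fun i hi => Nat.find_min hT hi).1⟩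

end Positional

end

/-- If some strategy guarantees that every consistent run reaches `T`
with truncated sum at most `ℓ`, then some pure memoryless strategy does as well. -/
theorem stmt2 {S A : Type} [Fintype S] [Fintype A] (M : MDP S A)
    (w : A → ℕ) (hw : ∀ a, 1 ≤ w a) (T : Finset S) (ℓ : ℕ)
    (hex : ∃ σ : Strat S A, IsStrategy M σ ∧
      ∀ ρ : ℕ → A × S, Consistent M σ ρ → tsRun M w T ρ ≤ (ℓ : ℝ≥0∞)) :
    ∃ σ' : Strat S A, IsStrategy M σ' ∧ IsPure σ' ∧ IsMemoryless M σ' ∧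
      ∀ ρ : ℕ → A × S, Consistent M σ' ρ → tsRun M w T ρ ≤ (ℓ : ℝ≥0∞) := by
  classical
  obtain ⟨σ, hσ, hσℓ⟩ := hex
  choose act hact_avail hact using
    SurelyReaches.exists_uniform_action (M := M) (w := w) (T := T)
  exact ⟨positional M act, isStrategy_positional hact_avail, isPure_positional,
    isMemoryless_positional, fun ρ hρ =>
      tsRun_le_of_positional hw hact (surelyReaches_init hσ hσℓ) hρ⟩
end

section
/- For every finite d-dimensional MDP D = (S, s_init, A, δ, w) (with w : A → ℕ^d, every coordinate of every weight ≥ 1) and every multi-constraint percentile query given by q constraints (T_i ⊆ S, k_i ∈ {1,…,d}, ℓ_i ∈ ℕ, α_i ∈ [0,1] ∩ ℚ) for i ∈ {1,…,q}: if there exists a strategy σ with P^σ(TS^{T_i}_{k_i} ≤ ℓ_i) ≥ α_i for every i, then there exists a (randomized) strategy σ' satisfying the same q inequalities whose choice after a history h = s₁a₁…s_n depends only on s_n together with, for each i ∈ {1,…,q}, the pair consisting of min(ℓ_i+1, Σ_{j=1}^{n-1} w_{k_i}(a_j)) and the Boolean recording whether some state of T_i occurs in h; in particular, a randomized finite-memory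 strategy suffices. -/
open scoped NNReal ENNReal

/-!
Let the memory of a history consist of its last state and, for each constraint `i`, the
weight accumulated on dimension `k i` capped at `ℓ i + 1` together with whether `T i` has
been visited. In memory `m`, the strategy `σ'` plays the average of the choices of `σ` over
all histories with memory `m`, weighted by their probabilities.

As long as some constraint `i` is still open (`T i` unvisited, capped weight at most `ℓ i`),
positive weights bound the length of every history with that memory by `ℓ i`. For such a
memory, induction on this bound (a memory leading to one bounded by `n` is bounded by
`n - 1`) shows that `σ'` and `σ` give the histories reaching it the same total probability,
so they also agree on the probability of each transition out of it. The event
`TS^{T i} ≤ ℓ i` is the union of the transitions that make the first visit of `T i` with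
weight at most `ℓ i`, all of which leave open memories, so it has the same probability under
`σ'` as under `σ`.
-/

open Finset

section Lists

variable {α : Type*} [Fintype α]

variable (α) in
noncomputable def listsLengthLe (n : ℕ) : Finset (List α) :=
  (List.finite_length_le α n).toFinset

@[simp]
theorem mem_listsLengthLe {n : ℕ} {l : List α} : l ∈ listsLengthLe α n ↔ l.length ≤ n := by
  simp [listsLengthLe]

theorem sum_eq_nil_add_sum_snoc [DecidableEq α] {β : Type*} [AddCommMonoid β]
    (E H : Finset (List α)) (hEH : ∀ l x, l ++ [x] ∈ E → l ∈ H) (f : List α → β) :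
    ∑ l ∈ E, f l = (if [] ∈ E then f [] else 0) +
      ∑ l ∈ H, ∑ x, if l ++ [x] ∈ E then f (l ++ [x]) else 0 := by
  have hsnoc : ((H ×ˢ univ).filter fun p : List α × α => p.1 ++ [p.2] ∈ E).image
      (fun p => p.1 ++ [p.2]) = E.filter (· ≠ []) := by
    ext l
    rcases l.eq_nil_or_concat' with rfl | ⟨l, x, rfl⟩
    · simp
    · simpa using hEH l x
  rw [← sum_filter_add_sum_filter_not E (· = []), sum_filter, sum_ite_eq', ← hsnoc,
    sum_image (by simp), sum_filter, sum_product]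

end Lists

section Histories

variable {S A : Type} [Fintype S] [Fintype A] (M : MDP S A)

@[simp]
theorem lastState_append_singleton (h : List (A × S)) (x : A × S) :
    lastState M (h ++ [x]) = x.2 := by
  simp [lastState]

theorem stateSeq_append_singleton (h : List (A × S)) (x : A × S) :
    stateSeq M (h ++ [x]) = stateSeq M h ++ [x.2] := by
  simp [stateSeq]

theorem hits_append_singleton_iff (T : Finset S) (h : List (A × S)) (x : A × S) :
    Hits M T (h ++ [x]) ↔ x.2 ∈ T ∧ ∀ s ∈ stateSeq M h, s ∉ T := by
  simp only [Hits, stateSeq_append_singleton, List.getLast_append_singleton,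
    List.dropLast_concat]

@[simp]
theorem probHist_nil (τ : Strat S A) : probHist M τ [] = 1 := rfl

theorem probFrom_append_singleton (τ : Strat S A) (pre h : List (A × S)) (x : A × S) :
    probFrom M τ pre (h ++ [x]) =
      probFrom M τ pre h * (τ (pre ++ h) x.1 * M.tr (lastState M (pre ++ h)) x.1 x.2) := by
  induction h generalizing pre with
  | nil => simp [probFrom]
  | cons y h ih =>
    simp only [List.cons_append, probFrom, ih, List.append_assoc, List.nil_append]
    ring

theorem probHist_append_singleton (τ : Strat S A) (h : List (A × S)) (x : A × S) :
    probHist M τ (h ++ [x]) = probHist M τ h * (τ h x.1 * M.tr (lastState M h) x.1 x.2) :=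
  probFrom_append_singleton M τ [] h x

end Histories

section WeightSums

variable {S A : Type}

@[simp]
theorem tsHist_append_singleton (w : A → ℕ) (h : List (A × S)) (x : A × S) :
    tsHist w (h ++ [x]) = tsHist w h + w x.1 := by
  simp [tsHist]

theorem length_le_tsHist {w : A → ℕ} (hw : ∀ a, 1 ≤ w a) (h : List (A × S)) :
    h.length ≤ tsHist w h := by
  induction h using List.reverseRecOn with
  | nil => simp [tsHist]
  | append_singleton h x ih =>
    simp only [List.length_append, List.length_singleton, tsHist_append_singleton]
    have := hw x.1
    omega

end WeightSums

structure Memory {S A : Type} [Fintype S] [Fintype A] (M : MDP S A) (Mem : Type) where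
  init : Mem
  upd : Mem → A × S → Mem
  state : Mem → S
  state_init : state init = M.init
  state_upd : ∀ m x, state (upd m x) = x.2

namespace Memory

variable {S A Mem : Type} [Fintype S] [Fintype A] {M : MDP S A} (𝓜 : Memory M Mem)

def mem (h : List (A × S)) : Mem := h.foldl 𝓜.upd 𝓜.init

@[simp]
theorem mem_nil : 𝓜.mem [] = 𝓜.init := rfl

@[simp]
theorem mem_append_singleton (h : List (A × S)) (x : A × S) :
    𝓜.mem (h ++ [x]) = 𝓜.upd (𝓜.mem h) x := by
  simp [mem]

theorem state_mem (h : List (A × S)) : 𝓜.state (𝓜.mem h) = lastState M h := by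
  induction h using List.reverseRecOn with
  | nil => exact 𝓜.state_init
  | append_singleton h x _ => rw [mem_append_singleton, state_upd, lastState_append_singleton]

def LengthBounded (n : ℕ) (m : Mem) : Prop :=
  ∀ h : List (A × S), 𝓜.mem h = m → h.length ≤ n

variable {𝓜} in
theorem LengthBounded.of_upd {n : ℕ} {h : List (A × S)} {x : A × S}
    (hb : 𝓜.LengthBounded n (𝓜.upd (𝓜.mem h) x)) :
    h.length < n ∧ 𝓜.LengthBounded (n - 1) (𝓜.mem h) := by
  have hsnoc : ∀ h', 𝓜.mem h' = 𝓜.mem h → h'.length + 1 ≤ n := fun h' hh' => by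
    simpa using hb (h' ++ [x]) (by rw [mem_append_singleton, hh'])
  exact ⟨hsnoc h rfl, fun h' hh' => by have := hsnoc h' hh'; omega⟩

open Classical

/-- Only histories of length at most `R` are counted: for a memory `m` with
`LengthBounded R m` this is the probability that a run passes through `m`. -/
noncomputable def mass (R : ℕ) (τ : Strat S A) (m : Mem) : ℝ≥0 :=
  ∑ h ∈ (listsLengthLe (A × S) R).filter (𝓜.mem · = m), probHist M τ h

noncomputable def actionMass (R : ℕ) (τ : Strat S A) (m : Mem) (a : A) : ℝ≥0 :=
  ∑ h ∈ (listsLengthLe (A × S) R).filter (𝓜.mem · = m), probHist M τ h * τ h a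

/-- The conditional distribution of the action chosen by `σ` given that the memory is `m`
(a fixed available action where `m` has no mass). -/
noncomputable def condChoice (R : ℕ) (σ : Strat S A) (m : Mem) : A → ℝ≥0 :=
  if 𝓜.mass R σ m = 0 then fun a => if a = (M.avail_nonempty (𝓜.state m)).choose then 1 else 0
  else fun a => 𝓜.actionMass R σ m a / 𝓜.mass R σ m

noncomputable def condStrat (R : ℕ) (σ : Strat S A) : Strat S A :=
  fun h => 𝓜.condChoice R σ (𝓜.mem h)

noncomputable def flow (R : ℕ) (τ : Strat S A) (C : Mem → A × S → Prop) : ℝ≥0 :=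
  ∑ h ∈ listsLengthLe (A × S) R, ∑ x : A × S,
    if C (𝓜.mem h) x then probHist M τ (h ++ [x]) else 0

variable (R : ℕ) {σ : Strat S A}

theorem sum_actionMass (hσ : IsStrategy M σ) (m : Mem) :
    ∑ a, 𝓜.actionMass R σ m a = 𝓜.mass R σ m := by
  unfold actionMass mass
  rw [sum_comm]
  exact sum_congr rfl fun h _ => by rw [← mul_sum, (hσ h).2, mul_one]

theorem actionMass_eq_zero (hσ : IsStrategy M σ) {m : Mem} {a : A}
    (ha : a ∉ M.avail (𝓜.state m)) : 𝓜.actionMass R σ m a = 0 := by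
  refine sum_eq_zero fun h hh => ?_
  rw [(mem_filter.mp hh).2.symm, state_mem] at ha
  rw [(hσ h).1 a ha, mul_zero]

theorem isStrategy_condStrat (hσ : IsStrategy M σ) : IsStrategy M (𝓜.condStrat R σ) := by
  intro h
  set m := 𝓜.mem h
  have hdef := (M.avail_nonempty (𝓜.state m)).choose_spec
  rw [← 𝓜.state_mem h]
  unfold condStrat condChoice
  split_ifs with h0 <;> dsimp only
  · refine ⟨fun a ha => if_neg (by rintro rfl; exact ha hdef), ?_⟩
    rw [sum_ite_eq', if_pos (mem_univ _)]
  · refine ⟨fun a ha => by rw [𝓜.actionMass_eq_zero R hσ ha, zero_div], ?_⟩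
    rw [← sum_div, 𝓜.sum_actionMass R hσ, div_self h0]

theorem actionMass_condStrat {m : Mem} (hm : 𝓜.mass R (𝓜.condStrat R σ) m = 𝓜.mass R σ m)
    (a : A) : 𝓜.actionMass R (𝓜.condStrat R σ) m a = 𝓜.actionMass R σ m a := by
  have hfiber : 𝓜.actionMass R (𝓜.condStrat R σ) m a =
      𝓜.mass R (𝓜.condStrat R σ) m * 𝓜.condChoice R σ m a := by
    rw [mass, sum_mul]
    exact sum_congr rfl fun h hh => by rw [← (mem_filter.mp hh).2]; rfl
  rw [hfiber, hm, condChoice]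
  by_cases h0 : 𝓜.mass R σ m = 0
  · rw [h0, zero_mul, eq_comm]
    refine sum_eq_zero fun h hh => ?_
    rw [(sum_eq_zero_iff.mp h0) h hh, zero_mul]
  · rw [if_neg h0]
    exact mul_div_cancel₀ _ h0

theorem flow_eq_sum_actionMass (τ : Strat S A) (C : Mem → A × S → Prop) :
    𝓜.flow R τ C = ∑ x : A × S, ∑ m ∈ (listsLengthLe (A × S) R).image 𝓜.mem,
      if C m x then 𝓜.actionMass R τ m x.1 * M.tr (𝓜.state m) x.1 x.2 else 0 := by
  rw [flow, sum_comm]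
  refine sum_congr rfl fun x _ => ?_
  rw [← sum_fiberwise_of_maps_to fun h hh => mem_image_of_mem 𝓜.mem hh]
  refine sum_congr rfl fun m _ => ?_
  split_ifs with hC
  · rw [actionMass, sum_mul]
    refine sum_congr rfl fun h hh => ?_
    obtain rfl := (mem_filter.mp hh).2
    rw [if_pos hC, probHist_append_singleton, state_mem, mul_assoc]
  · exact sum_eq_zero fun h hh => by rw [(mem_filter.mp hh).2, if_neg hC]

theorem flow_condStrat (C : Mem → A × S → Prop)
    (hC : ∀ h x, C (𝓜.mem h) x →
      𝓜.mass R (𝓜.condStrat R σ) (𝓜.mem h) = 𝓜.mass R σ (𝓜.mem h)) :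
    𝓜.flow R (𝓜.condStrat R σ) C = 𝓜.flow R σ C := by
  rw [flow_eq_sum_actionMass, flow_eq_sum_actionMass]
  refine sum_congr rfl fun x _ => sum_congr rfl fun m hm => ?_
  obtain ⟨h, -, rfl⟩ := mem_image.mp hm
  split_ifs with hCm
  · rw [𝓜.actionMass_condStrat R (hC h x hCm)]
  · rfl

theorem sum_probHist_eq_add_flow (E : Finset (List (A × S))) (C : Mem → A × S → Prop)
    (hEH : ∀ h x, h ++ [x] ∈ E → h.length ≤ R)
    (hEC : ∀ h, h.length ≤ R → ∀ x, h ++ [x] ∈ E ↔ C (𝓜.mem h) x) (τ : Strat S A) :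
    ∑ h ∈ E, probHist M τ h = (if [] ∈ E then 1 else 0) + 𝓜.flow R τ C := by
  rw [sum_eq_nil_add_sum_snoc E (listsLengthLe (A × S) R)
    (fun h x hx => mem_listsLengthLe.mpr (hEH h x hx)), probHist_nil, flow]
  congr 1
  refine sum_congr rfl fun h hh => sum_congr rfl fun x _ => ?_
  rw [if_congr (hEC h (mem_listsLengthLe.mp hh) x) rfl rfl]

theorem mass_eq_add_flow {m : Mem} (hm : 𝓜.LengthBounded R m) (τ : Strat S A) :
    𝓜.mass R τ m =
      (if 𝓜.init = m then 1 else 0) + 𝓜.flow R τ (fun m' x => 𝓜.upd m' x = m) := by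
  rw [mass, 𝓜.sum_probHist_eq_add_flow R _ (fun m' x => 𝓜.upd m' x = m) (fun h x hx => ?_)
    (fun h hh x => ?_)]
  · simp
  · have := mem_listsLengthLe.mp (mem_filter.mp hx).1
    rw [List.length_append, List.length_singleton] at this
    omega
  · simp only [mem_filter, mem_listsLengthLe, mem_append_singleton, and_iff_right_iff_imp]
    exact fun hx => hm _ (by rw [mem_append_singleton, hx])

theorem mass_condStrat {m : Mem} (hm : 𝓜.LengthBounded R m) :
    𝓜.mass R (𝓜.condStrat R σ) m = 𝓜.mass R σ m := by
  suffices ∀ n ≤ R, ∀ m, 𝓜.LengthBounded n m →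
      𝓜.mass R (𝓜.condStrat R σ) m = 𝓜.mass R σ m from this R le_rfl m hm
  intro n
  induction n using Nat.strong_induction_on with
  | _ n ih =>
    intro hnR m hm
    have hmR : 𝓜.LengthBounded R m := fun h hh => (hm h hh).trans hnR
    rw [𝓜.mass_eq_add_flow R hmR, 𝓜.mass_eq_add_flow R hmR]
    congr 1
    refine 𝓜.flow_condStrat R _ fun h x hx => ?_
    obtain ⟨hlt, hpred⟩ := (hx ▸ hm).of_upd
    exact ih (n - 1) (by omega) (by omega) _ hpred

theorem sum_probHist_condStrat (E : Finset (List (A × S))) (C : Mem → A × S → Prop)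
    (hEC : ∀ h x, h ++ [x] ∈ E ↔ C (𝓜.mem h) x)
    (hC : ∀ h x, C (𝓜.mem h) x → 𝓜.LengthBounded R (𝓜.mem h)) :
    ∑ h ∈ E, probHist M (𝓜.condStrat R σ) h = ∑ h ∈ E, probHist M σ h := by
  have hEH : ∀ h x, h ++ [x] ∈ E → h.length ≤ R := fun h x hx =>
    hC h x ((hEC h x).mp hx) h rfl
  rw [𝓜.sum_probHist_eq_add_flow R E C hEH (fun h _ => hEC h),
    𝓜.sum_probHist_eq_add_flow R E C hEH (fun h _ => hEC h),
    𝓜.flow_condStrat R C fun h x hx => 𝓜.mass_condStrat R (hC h x hx)]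

end Memory

section Percentile

variable {S A : Type} [Fintype S] [Fintype A] (M : MDP S A) {q : ℕ}
  (u : Fin q → A → ℕ) (T : Fin q → Finset S) (ℓ : Fin q → ℕ)

def percentileMemory : Memory M (S × (Fin q → ℕ) × (Fin q → Prop)) where
  init := (M.init, 0, fun i => M.init ∈ T i)
  upd m x := (x.2, fun i => min (ℓ i + 1) (m.2.1 i + u i x.1), fun i => m.2.2 i ∨ x.2 ∈ T i)
  state := Prod.fst
  state_init := rfl
  state_upd _ _ := rfl

theorem percentileMemory_mem (h : List (A × S)) :
    (percentileMemory M u T ℓ).mem h = (lastState M h,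
      fun i => min (ℓ i + 1) (tsHist (u i) h), fun i => ∃ s ∈ stateSeq M h, s ∈ T i) := by
  induction h using List.reverseRecOn with
  | nil => simp [percentileMemory, lastState, stateSeq, tsHist, Pi.zero_def]
  | append_singleton h x ih =>
    rw [Memory.mem_append_singleton, ih]
    simp only [percentileMemory, lastState_append_singleton, tsHist_append_singleton,
      stateSeq_append_singleton, List.mem_append, List.mem_singleton, Prod.mk.injEq, true_and]
    refine ⟨funext fun i => by omega, funext fun i => propext ?_⟩
    simp only [or_and_right, exists_or, exists_eq_left]

def FirstHitWithin (i : Fin q) (m : S × (Fin q → ℕ) × (Fin q → Prop)) (x : A × S) : Prop :=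
  ¬ m.2.2 i ∧ x.2 ∈ T i ∧ m.2.1 i + u i x.1 ≤ ℓ i

theorem hits_append_singleton_and_tsHist_le_iff (i : Fin q) (h : List (A × S)) (x : A × S) :
    Hits M (T i) (h ++ [x]) ∧ tsHist (u i) (h ++ [x]) ≤ ℓ i ↔
      FirstHitWithin u T ℓ i ((percentileMemory M u T ℓ).mem h) x := by
  rw [hits_append_singleton_iff, tsHist_append_singleton, percentileMemory_mem, FirstHitWithin]
  simp only [not_exists, not_and]
  constructor
  · rintro ⟨⟨hx, hnot⟩, hle⟩
    exact ⟨hnot, hx, by omega⟩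
  · rintro ⟨hnot, hx, hle⟩
    exact ⟨⟨hx, hnot⟩, by omega⟩

theorem lengthBounded_of_firstHitWithin {i : Fin q} (hu : ∀ a, 1 ≤ u i a) {h : List (A × S)}
    {x : A × S} (hx : FirstHitWithin u T ℓ i ((percentileMemory M u T ℓ).mem h) x) :
    (percentileMemory M u T ℓ).LengthBounded (univ.sup ℓ)
      ((percentileMemory M u T ℓ).mem h) := by
  intro h' hh'
  have hcap := congrArg (fun m => m.2.1 i) hh'
  simp only [percentileMemory_mem] at hcap hx
  have hle := hx.2.2
  dsimp only at hcap hle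
  have := length_le_tsHist hu h'
  have := le_sup (f := ℓ) (mem_univ i)
  omega

open Classical in
theorem probTSLe_eq_sum {w : A → ℕ} (hw : ∀ a, 1 ≤ w a) (τ : Strat S A) (T : Finset S)
    (ℓ : ℕ) : probTSLe M τ w T ℓ = ∑ h ∈ (listsLengthLe (A × S) ℓ).filter
      (fun h => Hits M T h ∧ tsHist w h ≤ ℓ), (probHist M τ h : ℝ≥0∞) := by
  have hmem : ∀ h, (Hits M T h ∧ tsHist w h ≤ ℓ) ↔
      h ∈ (listsLengthLe (A × S) ℓ).filter (fun h => Hits M T h ∧ tsHist w h ≤ ℓ) := by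
    simp only [mem_filter, mem_listsLengthLe, iff_and_self]
    exact fun h hh => (length_le_tsHist hw h).trans hh.2
  rw [probTSLe, ← Finset.tsum_subtype]
  exact (Equiv.subtypeEquivRight hmem).tsum_eq (fun h => (probHist M τ h.1 : ℝ≥0∞))

theorem probTSLe_condStrat_percentileMemory (hu : ∀ i a, 1 ≤ u i a) (σ : Strat S A)
    (i : Fin q) :
    probTSLe M ((percentileMemory M u T ℓ).condStrat (univ.sup ℓ) σ) (u i) (T i) (ℓ i) =
      probTSLe M σ (u i) (T i) (ℓ i) := by
  classical
  rw [probTSLe_eq_sum M (hu i), probTSLe_eq_sum M (hu i)]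
  exact_mod_cast (percentileMemory M u T ℓ).sum_probHist_condStrat _ _ (FirstHitWithin u T ℓ i)
    (fun h x => by
      rw [mem_filter, mem_listsLengthLe, ← hits_append_singleton_and_tsHist_le_iff,
        and_iff_right_iff_imp]
      exact fun hx => (length_le_tsHist (hu i) _).trans hx.2)
    (fun h x => lengthBounded_of_firstHitWithin M u T ℓ (hu i))

end Percentile

theorem stmt4_general {S A : Type} [Fintype S] [Fintype A] (M : MDP S A)
    (d : ℕ) (w : A → Fin d → ℕ) (hw : ∀ a k, 1 ≤ w a k)
    (q : ℕ) (T : Fin q → Finset S) (k : Fin q → Fin d) (ℓ : Fin q → ℕ)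
    (α : Fin q → ℚ)
    (hex : ∃ σ : Strat S A, IsStrategy M σ ∧ ∀ i : Fin q,
      ENNReal.ofReal ((α i : ℝ)) ≤ probTSLe M σ (fun a => w a (k i)) (T i) (ℓ i)) :
    ∃ σ' : Strat S A, IsStrategy M σ' ∧
      (∀ i : Fin q,
        ENNReal.ofReal ((α i : ℝ)) ≤ probTSLe M σ' (fun a => w a (k i)) (T i) (ℓ i)) ∧
      (∀ h h' : List (A × S), lastState M h = lastState M h' →
        (∀ i : Fin q,
          min (ℓ i + 1) (tsHist (fun a => w a (k i)) h)
            = min (ℓ i + 1) (tsHist (fun a => w a (k i)) h') ∧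
          ((∃ s ∈ stateSeq M h, s ∈ T i) ↔ (∃ s ∈ stateSeq M h', s ∈ T i))) →
        σ' h = σ' h') := by
  obtain ⟨σ, hσ, hσℓ⟩ := hex
  let 𝓜 := percentileMemory M (fun i a => w a (k i)) T ℓ
  refine ⟨𝓜.condStrat (univ.sup ℓ) σ, 𝓜.isStrategy_condStrat _ hσ, fun i => ?_,
    fun h h' hlast hsame => ?_⟩
  · rw [probTSLe_condStrat_percentileMemory M _ T ℓ (fun i a => hw a (k i))]
    exact hσℓ i
  · have hmem : 𝓜.mem h = 𝓜.mem h' := by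
      rw [percentileMemory_mem, percentileMemory_mem]
      exact Prod.ext hlast
        (Prod.ext (funext fun i => (hsame i).1) (funext fun i => propext (hsame i).2))
    exact congrArg (𝓜.condChoice _ σ) hmem

/-- multi-constraint percentile queries. In a `d`-dimensional MDP with
strictly positive integer weights, if some strategy satisfies all `q` percentile
constraints `P(TS^{T i}_{k i} ≤ ℓ i) ≥ α i`, then some (randomized) strategy whose choice
only depends on the last state of the history together with, for each constraint `i`,
`min (ℓ i + 1) (accumulated weight on dimension k i)` and the Boolean recording whether
`T i` has already been visited — hence a randomized finite-memory strategy — satisfies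
them as well. -/
theorem stmt4 {S A : Type} [Fintype S] [Fintype A] (M : MDP S A)
    (d : ℕ) (w : A → Fin d → ℕ) (hw : ∀ a k, 1 ≤ w a k)
    (q : ℕ) (T : Fin q → Finset S) (k : Fin q → Fin d) (ℓ : Fin q → ℕ)
    (α : Fin q → ℚ) (hα : ∀ i, 0 ≤ α i ∧ α i ≤ 1)
    (hex : ∃ σ : Strat S A, IsStrategy M σ ∧ ∀ i : Fin q,
      ENNReal.ofReal ((α i : ℝ)) ≤ probTSLe M σ (fun a => w a (k i)) (T i) (ℓ i)) :
    ∃ σ' : Strat S A, IsStrategy M σ' ∧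
      (∀ i : Fin q,
        ENNReal.ofReal ((α i : ℝ)) ≤ probTSLe M σ' (fun a => w a (k i)) (T i) (ℓ i)) ∧
      (∀ h h' : List (A × S), lastState M h = lastState M h' →
        (∀ i : Fin q,
          min (ℓ i + 1) (tsHist (fun a => w a (k i)) h)
            = min (ℓ i + 1) (tsHist (fun a => w a (k i)) h') ∧
          ((∃ s ∈ stateSeq M h, s ∈ T i) ↔ (∃ s ∈ stateSeq M h', s ∈ T i))) →
        σ' h = σ' h') :=
  stmt4_general M d w hw q T k ℓ α hex
end
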